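/- If Q_n = a·(10^m − 1)/9 for some a ∈ {1, 2, …, 9} and some positive integer m, then n ∈ {0, 1, 2}. -/

import Mathlib

/-!
Since `80 ∣ 10 ^ 4`, a repdigit `a · (10 ^ m - 1) / 9` with `m ≥ 4` is `≡ a · 1111 (mod 80)`. The
Pell–Lucas sequence is periodic modulo 80 with period 12, and none of its twelve residues is of
the form `a · 1111 mod 80` with `a ≤ 9`. A repdigit with at most three digits is at most
`999 < Q 8`, which leaves finitely many cases.
-/

def pellLucas : ℕ → ℕ
  | 0 => 2
  | 1 => 2
  | n + 2 => 2 * pellLucas (n + 1) + pellLucas n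

open Finset

theorem pellLucas_add_two (n : ℕ) :
    pellLucas (n + 2) = 2 * pellLucas (n + 1) + pellLucas n := rfl

theorem pellLucas_le_succ (n : ℕ) : pellLucas n ≤ pellLucas (n + 1) := by
  cases n with
  | zero => decide
  | succ n => rw [pellLucas_add_two]; omega

theorem pellLucas_monotone : Monotone pellLucas :=
  monotone_nat_of_le_succ pellLucas_le_succ

theorem pellLucas_add_modEq_of_modEq {M p : ℕ} (h₀ : pellLucas p ≡ pellLucas 0 [MOD M])
    (h₁ : pellLucas (p + 1) ≡ pellLucas 1 [MOD M]) (n : ℕ) :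
    pellLucas (n + p) ≡ pellLucas n [MOD M] := by
  induction n using Nat.twoStepInduction with
  | zero => simpa using h₀
  | one => simpa [add_comm] using h₁
  | more n ih₀ ih₁ =>
    rw [show n + 2 + p = n + p + 2 by omega, pellLucas_add_two, pellLucas_add_two,
      show n + p + 1 = n + 1 + p by omega]
    exact (ih₁.mul_left 2).add ih₀

theorem pellLucas_modEq_mod_twelve (n : ℕ) : pellLucas n ≡ pellLucas (n % 12) [MOD 80] := by
  have hperiod := pellLucas_add_modEq_of_modEq (M := 80) (p := 12) (by decide) (by decide)
  induction n using Nat.strong_induction_on with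
  | _ n ih =>
    obtain hn | hn := lt_or_ge n 12
    · rw [Nat.mod_eq_of_lt hn]
    · obtain ⟨k, rfl⟩ := Nat.exists_eq_add_of_le' hn
      rw [Nat.add_mod_right]
      exact (hperiod k).trans (ih k (by omega))

theorem pellLucas_mod_eighty_ne (n : ℕ) {a : ℕ} (ha : a ≤ 9) :
    pellLucas n % 80 ≠ a * 1111 % 80 := by
  have residues : ∀ i < 12, ∀ a ≤ 9, pellLucas i % 80 ≠ a * 1111 % 80 := by decide
  rw [pellLucas_modEq_mod_twelve n]
  exact residues _ (Nat.mod_lt _ (by norm_num)) a ha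

theorem repunit_eq_sum (m : ℕ) : (10 ^ m - 1) / 9 = ∑ i ∈ range m, 10 ^ i :=
  (Nat.geomSum_eq le_add_self m).symm

theorem repunit_modEq (k j : ℕ) :
    (10 ^ (k + j) - 1) / 9 ≡ (10 ^ k - 1) / 9 [MOD 10 ^ k] := by
  rw [repunit_eq_sum, repunit_eq_sum, sum_range_add]
  simp only [pow_add, ← mul_sum]
  exact Nat.add_mul_mod_self_left _ _ _

theorem repunit_le_of_lt_four {m : ℕ} (hm : m < 4) : (10 ^ m - 1) / 9 ≤ 111 :=
  calc (10 ^ m - 1) / 9 ≤ (10 ^ 3 - 1) / 9 := by gcongr <;> omega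
    _ = 111 := by norm_num

theorem pellLucas_repdigit_general (n m a : ℕ) (ha9 : a ≤ 9)
    (h : pellLucas n = a * ((10 ^ m - 1) / 9)) :
    n = 0 ∨ n = 1 ∨ n = 2 := by
  obtain hm | hm := lt_or_ge m 4
  · have hn : n < 8 := by
      by_contra! hn
      have h8 : pellLucas 8 ≤ pellLucas n := pellLucas_monotone hn
      have : pellLucas 8 = 1154 := rfl
      have := Nat.mul_le_mul ha9 (repunit_le_of_lt_four hm)
      omega
    have small_cases : ∀ n < 8, ∀ m < 4, ∀ a ≤ 9,
        pellLucas n = a * ((10 ^ m - 1) / 9) → n ≤ 2 := by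
      decide
    have := small_cases n hn m hm a ha9 h
    omega
  · obtain ⟨j, rfl⟩ := Nat.exists_eq_add_of_le hm
    have hmod : pellLucas n ≡ a * 1111 [MOD 80] :=
      h ▸ ((repunit_modEq 4 j).of_dvd (by norm_num)).mul_left a
    exact absurd hmod (pellLucas_mod_eighty_ne n ha9)

/-- If `Q_n = a·(10^m − 1)/9` for some `a ∈ {1, …, 9}` and some positive
integer `m`, then `n ∈ {0, 1, 2}`. -/
theorem pellLucas_repdigit (n m a : ℕ) (hm : 0 < m) (ha1 : 1 ≤ a) (ha9 : a ≤ 9)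
    (h : pellLucas n = a * ((10 ^ m - 1) / 9)) :
    n = 0 ∨ n = 1 ∨ n = 2 :=
  pellLucas_repdigit_general n m a ha9 h
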